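/- For every λ ∈ ℂ and all a, b ∈ {1,2,3}, the following commutation relation holds in Ω¹: x_a·dx_b − dx_b·x_a = δ_{a,1}(1 − δ_{b,1})·λ·dx_b − δ_{b,1}·λ·dx_a, where δ is the Kronecker delta. Explicitly: [x₁,dx₁] = −λdx₁, [x₁,dx₂] = λdx₂, [x₁,dx₃] = λdx₃, [x₂,dx₁] = −λdx₂, [x₃,dx₁] = −λdx₃, and [x₂,dx₂] = [x₂,dx₃] = [x₃,dx₂] = [x₃,dx₃] = 0. -/

import Mathlib

noncomputable section
open TensorProduct

/-- The bracket of `g_λ` on coordinates: `[x₁,x₂] = 2λx₂`, `[x₁,x₃] = 2λx₃`, `[x₂,x₃] = 0`. -/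
def gbr (l : ℂ) (u v : Fin 3 → ℂ) : Fin 3 → ℂ :=
  ![0, 2 * l * (u 0 * v 1 - u 1 * v 0), 2 * l * (u 0 * v 2 - u 2 * v 0)]

lemma gbr_add_left (l : ℂ) (u v w : Fin 3 → ℂ) :
    gbr l (u + v) w = gbr l u w + gbr l v w := by
  funext i; fin_cases i <;> simp [gbr] <;> ring

lemma gbr_add_right (l : ℂ) (u v w : Fin 3 → ℂ) :
    gbr l u (v + w) = gbr l u v + gbr l u w := by
  funext i; fin_cases i <;> simp [gbr] <;> ring

lemma gbr_self (l : ℂ) (u : Fin 3 → ℂ) : gbr l u u = 0 := by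
  funext i; fin_cases i <;> simp [gbr] <;> ring_nf <;> tauto

lemma gbr_leibniz (l : ℂ) (u v w : Fin 3 → ℂ) :
    gbr l u (gbr l v w) = gbr l (gbr l u v) w + gbr l v (gbr l u w) := by
  funext i; fin_cases i <;> simp [gbr] <;> ring

lemma gbr_smul_right (l c : ℂ) (u v : Fin 3 → ℂ) :
    gbr l u (c • v) = c • gbr l u v := by
  funext i; fin_cases i <;> simp [gbr] <;> ring

/-- The underlying type of the Lie algebra `g_λ`. -/
def G (_l : ℂ) : Type := Fin 3 → ℂ

instance (l : ℂ) : AddCommGroup (G l) := inferInstanceAs (AddCommGroup (Fin 3 → ℂ))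
instance (l : ℂ) : Module ℂ (G l) := inferInstanceAs (Module ℂ (Fin 3 → ℂ))

instance (l : ℂ) : LieRing (G l) :=
  { ((inferInstanceAs (AddCommGroup (G l)) : AddCommGroup (G l))) with
    bracket := fun u v => gbr l u v
    add_lie := fun u v w => gbr_add_left l u v w
    lie_add := fun u v w => gbr_add_right l u v w
    lie_self := fun u => gbr_self l u
    leibniz_lie := fun u v w => gbr_leibniz l u v w }

instance (l : ℂ) : LieAlgebra ℂ (G l) :=
  { lie_smul := fun c u v => gbr_smul_right l c u v }

/-- The universal enveloping algebra `U_λ`. -/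
abbrev Uenv (l : ℂ) := UniversalEnvelopingAlgebra ℂ (G l)

attribute [local instance] LieRing.ofAssociativeRing
attribute [local instance] LieAlgebra.ofAssociativeAlgebra

/-- The canonical embedding `ι : g_λ → U_λ`. -/
def iotaU (l : ℂ) : G l →ₗ⁅ℂ⁆ Uenv l := UniversalEnvelopingAlgebra.ι ℂ

/-- The basis vector `x_a` of `g_λ` (0-indexed). -/
def xvec (l : ℂ) (a : Fin 3) : G l := (Pi.single a 1 : Fin 3 → ℂ)

/-- The generator `x_a` inside `U_λ`. -/
def Xgen (l : ℂ) (a : Fin 3) : Uenv l := iotaU l (xvec l a)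

abbrev V3 := Fin 3 → ℂ

/-- `Ω¹ = ℂ³ ⊗ U_λ`. -/
abbrev Om1 (l : ℂ) := V3 ⊗[ℂ] Uenv l

/-- The representation matrices `ρ(x₁) = λ diag(1,1,-1)`, `ρ(x₂) = λE₁₃`, `ρ(x₃) = λE₂₃`. -/
def rhoM (l : ℂ) : Fin 3 → Matrix (Fin 3) (Fin 3) ℂ :=
  ![l • Matrix.diagonal ![1, 1, -1],
    l • Matrix.single 0 2 1,
    l • Matrix.single 1 2 1]

/-- The representation `ρ` on a general element of `g_λ`. -/
def rhoLin (l : ℂ) (u : G l) : Matrix (Fin 3) (Fin 3) ℂ :=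
  u 0 • rhoM l 0 + u 1 • rhoM l 1 + u 2 • rhoM l 2

/-- Right action of `U_λ` on `Ω¹`: `(v ⊗ u)·w = v ⊗ (u*w)`. -/
def rAct (l : ℂ) (w : Uenv l) : Om1 l →ₗ[ℂ] Om1 l :=
  LinearMap.lTensor V3 (LinearMap.mulRight ℂ w)

/-- Left action of `x ∈ g_λ` on `Ω¹`: `x·(v ⊗ u) = ρ(x)v ⊗ u + v ⊗ (x*u)`. -/
def lActVec (l : ℂ) (x : G l) : Om1 l →ₗ[ℂ] Om1 l :=
  LinearMap.rTensor (Uenv l) (Matrix.toLin' (rhoLin l x)) +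
    LinearMap.lTensor V3 (LinearMap.mulLeft ℂ (iotaU l x))

/-- The invariant 1-forms: `dx₁ = -e₃`, `dx₂ = e₁`, `dx₃ = e₂` (as vectors in `ℂ³`). -/
def omegaV : Fin 3 → V3 :=
  ![-(Pi.single 2 1), Pi.single 0 1, Pi.single 1 1]

/-- The basic 1-forms `dx_a = ω_a ⊗ 1  ∈ Ω¹`. -/
def dx (l : ℂ) (a : Fin 3) : Om1 l := (omegaV a) ⊗ₜ[ℂ] (1 : Uenv l)

open scoped Matrix

lemma rhoLin_xvec (l : ℂ) (a : Fin 3) : rhoLin l (xvec l a) = rhoM l a := by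
  fin_cases a <;> simp [rhoLin, xvec]

lemma rhoM_mulVec_omegaV (l : ℂ) (a b : Fin 3) :
    rhoM l a *ᵥ omegaV b =
      ((if a = 0 then (1 : ℂ) else 0) * (1 - if b = 0 then (1 : ℂ) else 0) * l) • omegaV b -
        ((if b = 0 then (1 : ℂ) else 0) * l) • omegaV a := by
  fin_cases a <;> fin_cases b <;> funext i <;> fin_cases i <;>
    simp [rhoM, omegaV, Matrix.mulVec, Matrix.single, Matrix.diagonal]

/-- Since `1` is central in `U_λ`, the left and right actions of `ι x` cancel on `v ⊗ 1`. -/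
lemma lActVec_sub_rAct_tmul_one (l : ℂ) (x : G l) (v : V3) :
    lActVec l x (v ⊗ₜ 1) - rAct l (iotaU l x) (v ⊗ₜ 1) = (rhoLin l x *ᵥ v) ⊗ₜ 1 := by
  simp [lActVec, rAct, Matrix.toLin'_apply]

/-- The commutation relations between generators and basic 1-forms:
`x_a·dx_b − dx_b·x_a = δ_{a,1}(1 − δ_{b,1})·λ·dx_b − δ_{b,1}·λ·dx_a`
(indices `0,1,2` here correspond to `1,2,3` in the paper). -/
theorem commutation_generators_one_forms (l : ℂ) (a b : Fin 3) :
    lActVec l (xvec l a) (dx l b) - rAct l (Xgen l a) (dx l b) =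
      ((if a = 0 then (1 : ℂ) else 0) * (1 - if b = 0 then (1 : ℂ) else 0) * l) • dx l b -
        ((if b = 0 then (1 : ℂ) else 0) * l) • dx l a := by
  rw [dx, dx, Xgen, lActVec_sub_rAct_tmul_one, rhoLin_xvec, rhoM_mulVec_omegaV,
    sub_tmul, smul_tmul', smul_tmul']
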